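/- Fix a 2-colouring (red/blue) of the complete symmetric digraph on ℕ⁺ with no red directed path of length r and in which every blue directed path has upper density at most 1/r. Let A_i (0 ≤ i ≤ r-1) be the set of vertices from which the longest red directed path has exactly i edges. Then every A_i has upper density exactly 1/r. -/

import Mathlib

open Filter

open scoped Classical in
/-- Upper density of a set of naturals: `limsup |A ∩ {1,...,n}| / n`. -/
noncomputable def upDens (A : Set ℕ) : ℝ :=
  limsup (fun n : ℕ => (((Finset.Icc 1 n).filter (fun m => m ∈ A)).card : ℝ) / n) atTop

def red : Bool := true
def blue : Bool := false

/-- A finite directed path (list of distinct positive integers) all of whose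
consecutive edges have colour `col` under the edge-colouring `c`. -/
def FinPath (c : ℕ → ℕ → Bool) (col : Bool) (l : List ℕ) : Prop :=
  l.Nodup ∧ (∀ v ∈ l, 0 < v) ∧ l.Chain' (fun a b => c a b = col)

/-- An infinite directed path of colour `col` under the edge-colouring `c`. -/
def InfPath (c : ℕ → ℕ → Bool) (col : Bool) (f : ℕ → ℕ) : Prop :=
  Function.Injective f ∧ (∀ j, 0 < f j) ∧ ∀ j, c (f j) (f (j + 1)) = col

/-- There is no directed path of colour `col` with `r` edges (i.e. `r+1` vertices). -/
def NoPathOfLength (c : ℕ → ℕ → Bool) (col : Bool) (r : ℕ) : Prop :=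
  ¬ ∃ l : List ℕ, FinPath c col l ∧ l.length = r + 1

/-- There is a directed path of colour `col` with `k` edges starting at `v`. -/
def PathFrom (c : ℕ → ℕ → Bool) (col : Bool) (v k : ℕ) : Prop :=
  ∃ l : List ℕ, FinPath c col l ∧ l.head? = some v ∧ l.length = k + 1

/-- `v ∈ A_i`: the longest red directed path starting at `v` has exactly `i` edges. -/
def Level (c : ℕ → ℕ → Bool) (v i : ℕ) : Prop :=
  PathFrom c red v i ∧ ¬ PathFrom c red v (i + 1)

open scoped Classical

noncomputable def densF (A : Set ℕ) (n : ℕ) : ℝ :=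
  (((Finset.Icc 1 n).filter (fun m => m ∈ A)).card : ℝ) / n

lemma upDens_eq (A : Set ℕ) : upDens A = limsup (densF A) atTop := rfl

lemma densF_nonneg (A : Set ℕ) (n : ℕ) : 0 ≤ densF A n := by
  unfold densF; positivity

lemma densF_le_one (A : Set ℕ) (n : ℕ) : densF A n ≤ 1 := by
  unfold densF
  rcases Nat.eq_zero_or_pos n with h | h
  · simp [h]
  · rw [div_le_one (by exact_mod_cast h)]
    have h1 := Finset.card_filter_le (Finset.Icc 1 n) (fun m => m ∈ A)
    have h2 : (Finset.Icc 1 n).card = n := by rw [Nat.card_Icc]; omega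
    exact_mod_cast h2 ▸ h1

lemma densF_mono {A B : Set ℕ} (h : A ⊆ B) (n : ℕ) : densF A n ≤ densF B n := by
  unfold densF
  have hc : ((((Finset.Icc 1 n).filter (fun m => m ∈ A)).card : ℝ))
      ≤ (((Finset.Icc 1 n).filter (fun m => m ∈ B)).card : ℝ) := by
    exact_mod_cast Finset.card_le_card (Finset.monotone_filter_right _ (fun x _ hx => h hx))
  have hn : (0:ℝ) ≤ n := Nat.cast_nonneg n
  gcongr

lemma bddAbove_densF (A : Set ℕ) : IsBoundedUnder (· ≤ ·) atTop (densF A) :=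
  isBoundedUnder_of ⟨1, fun n => densF_le_one A n⟩

lemma bddBelow_densF (A : Set ℕ) : IsBoundedUnder (· ≥ ·) atTop (densF A) :=
  isBoundedUnder_of ⟨0, fun n => densF_nonneg A n⟩

lemma cobdd_densF (A : Set ℕ) : IsCoboundedUnder (· ≤ ·) atTop (densF A) :=
  (bddBelow_densF A).isCoboundedUnder_le

lemma upDens_mono {A B : Set ℕ} (h : A ⊆ B) : upDens A ≤ upDens B := by
  rw [upDens_eq, upDens_eq]
  exact limsup_le_limsup (Eventually.of_forall (densF_mono h)) (cobdd_densF A) (bddAbove_densF B)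

lemma upDens_nonneg (A : Set ℕ) : 0 ≤ upDens A := by
  rw [upDens_eq]
  have h0 : (0:ℝ) = limsup (fun _ : ℕ => (0:ℝ)) atTop := (limsup_const 0).symm
  rw [h0]
  have hcb : IsCoboundedUnder (· ≤ ·) atTop (fun _ : ℕ => (0:ℝ)) :=
    (isBoundedUnder_of (r := (· ≥ ·)) ⟨0, fun _ => le_refl (0:ℝ)⟩).isCoboundedUnder_le
  exact limsup_le_limsup (Eventually.of_forall (densF_nonneg A)) hcb (bddAbove_densF A)

lemma upDens_finite {A : Set ℕ} (h : A.Finite) : upDens A = 0 := by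
  have hle : ∀ n, densF A n ≤ (h.toFinset.card : ℝ) / n := by
    intro n
    unfold densF
    have hc : ((((Finset.Icc 1 n).filter (fun m => m ∈ A)).card : ℝ)) ≤ (h.toFinset.card : ℝ) := by
      exact_mod_cast Finset.card_le_card (fun x hx => by
        simp only [Finset.mem_filter] at hx
        exact h.mem_toFinset.2 hx.2)
    have hn : (0:ℝ) ≤ n := Nat.cast_nonneg n
    gcongr
  have htend : Filter.Tendsto (densF A) atTop (nhds 0) :=
    squeeze_zero (densF_nonneg A) hle (tendsto_const_div_atTop_nhds_zero_nat _)
  rw [upDens_eq]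
  exact htend.limsup_eq

lemma upDens_union_le (A B : Set ℕ) : upDens (A ∪ B) ≤ upDens A + upDens B := by
  rw [upDens_eq, upDens_eq, upDens_eq]
  have hle : ∀ n, densF (A ∪ B) n ≤ (densF A + densF B) n := by
    intro n
    show densF (A ∪ B) n ≤ densF A n + densF B n
    unfold densF
    rw [← add_div]
    have hsub : (Finset.Icc 1 n).filter (fun m => m ∈ A ∪ B) ⊆
        (Finset.Icc 1 n).filter (fun m => m ∈ A) ∪ (Finset.Icc 1 n).filter (fun m => m ∈ B) := by
      intro x hx
      simp only [Finset.mem_filter, Finset.mem_union, Set.mem_union] at *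
      tauto
    have hc : ((((Finset.Icc 1 n).filter (fun m => m ∈ A ∪ B)).card : ℝ))
        ≤ ((((Finset.Icc 1 n).filter (fun m => m ∈ A)).card : ℕ) +
           (((Finset.Icc 1 n).filter (fun m => m ∈ B)).card : ℕ) : ℝ) := by
      exact_mod_cast le_trans (Finset.card_le_card hsub) (Finset.card_union_le _ _)
    have hn : (0:ℝ) ≤ n := Nat.cast_nonneg n
    push_cast at hc ⊢
    gcongr
    convert hc using 4
    rfl
  have hb : IsBoundedUnder (· ≤ ·) atTop (densF A + densF B) :=
    isBoundedUnder_of ⟨2, fun n => by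
      have h1 := densF_le_one A n; have h2 := densF_le_one B n
      show densF A n + densF B n ≤ 2; linarith⟩
  have h1 : limsup (densF (A ∪ B)) atTop ≤ limsup (densF A + densF B) atTop :=
    limsup_le_limsup (Eventually.of_forall hle) (cobdd_densF _) hb
  have h2 : limsup (densF A + densF B) atTop ≤ limsup (densF A) atTop + limsup (densF B) atTop :=
    limsup_add_le (bddBelow_densF A) (bddAbove_densF A) (cobdd_densF B) (bddAbove_densF B)
  linarith


lemma limsup_sum_le {ι : Type*} (s : Finset ι) (u : ι → ℕ → ℝ)
    (h0 : ∀ i n, 0 ≤ u i n) (h1 : ∀ i n, u i n ≤ 1) :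
    limsup (fun n => ∑ i ∈ s, u i n) atTop ≤ ∑ i ∈ s, limsup (u i) atTop := by
  classical
  induction s using Finset.cons_induction with
  | empty => simp [limsup_const]
  | cons a s ha ih =>
    have hfe : (fun n => ∑ i ∈ Finset.cons a s ha, u i n)
        = (u a + fun n => ∑ i ∈ s, u i n) := by
      funext n; rw [Finset.sum_cons]; rfl
    rw [hfe, Finset.sum_cons]
    have bb : IsBoundedUnder (· ≥ ·) atTop (u a) := isBoundedUnder_of ⟨0, fun n => h0 a n⟩
    have ba : IsBoundedUnder (· ≤ ·) atTop (u a) := isBoundedUnder_of ⟨1, fun n => h1 a n⟩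
    have sb : IsBoundedUnder (· ≥ ·) atTop (fun n => ∑ i ∈ s, u i n) :=
      isBoundedUnder_of ⟨0, fun n => Finset.sum_nonneg (fun i _ => h0 i n)⟩
    have sa : IsBoundedUnder (· ≤ ·) atTop (fun n => ∑ i ∈ s, u i n) :=
      isBoundedUnder_of ⟨(s.card : ℝ), fun n => by
        calc ∑ i ∈ s, u i n ≤ ∑ i ∈ s, (1:ℝ) := Finset.sum_le_sum (fun i _ => h1 i n)
        _ = s.card := by simp⟩
    have key := limsup_add_le (f := atTop) (u := u a) (v := fun n => ∑ i ∈ s, u i n)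
      bb ba sb.isCoboundedUnder_le sa
    exact key.trans (by linarith [ih])

lemma pathFrom_mono {c : ℕ → ℕ → Bool} {col : Bool} {v k m : ℕ}
    (h : PathFrom c col v k) (hm : m ≤ k) : PathFrom c col v m := by
  obtain ⟨l, ⟨hnd, hpos, hch⟩, hhd, hlen⟩ := h
  refine ⟨l.take (m+1), ⟨(List.take_sublist _ _).nodup hnd,
    fun x hx => hpos x ((List.take_sublist _ _).subset hx), hch.take _⟩, ?_, ?_⟩
  · cases l with
    | nil => simp at hlen
    | cons a t => simpa using hhd
  · rw [List.length_take, hlen]; omega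

lemma level_exists {r : ℕ} {c : ℕ → ℕ → Bool} (h : NoPathOfLength c red r) {v : ℕ}
    (hv : 0 < v) : ∃ i < r, Level c v i := by
  have h0 : PathFrom c red v 0 :=
    ⟨[v], ⟨List.nodup_singleton v, by simpa using hv, List.isChain_singleton v⟩, rfl, rfl⟩
  have hr : ¬ PathFrom c red v r := by
    rintro ⟨l, hl, -, hlen⟩
    exact h ⟨l, hl, hlen⟩
  have hex : ∃ k, ¬ PathFrom c red v k := ⟨r, hr⟩
  set N := Nat.find hex with hN
  have hNpos : 0 < N := by
    rcases Nat.eq_zero_or_pos N with h' | h'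
    · exact absurd h0 (h' ▸ Nat.find_spec hex)
    · exact h'
  have hNle : N ≤ r := Nat.find_le hr
  refine ⟨N - 1, by omega, ?_, ?_⟩
  · have := Nat.find_min hex (m := N - 1) (by omega)
    simpa using not_not.mp this
  · have : N - 1 + 1 = N := by omega
    rw [this]
    exact Nat.find_spec hex

lemma level_unique {c : ℕ → ℕ → Bool} {v i j : ℕ} (hi : Level c v i) (hj : Level c v j) :
    i = j := by
  by_contra hne
  rcases Nat.lt_or_ge i j with h' | h'
  · exact hi.2 (pathFrom_mono hj.1 (by omega))
  · exact hj.2 (pathFrom_mono hi.1 (by omega))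

lemma exists_blue_path (c : ℕ → ℕ → Bool) (A : Set ℕ) (hA : A.Infinite)
    (hpos : ∀ v ∈ A, 0 < v)
    (hout : ∀ w ∈ A, {x | x ∈ A ∧ x ≠ w ∧ c w x = blue}.Infinite)
    (hin : ∀ x ∈ A, {w | w ∈ A ∧ w ≠ x ∧ c w x = red}.Finite) :
    ∃ f : ℕ → ℕ, InfPath c blue f ∧ Set.range f = A := by
  classical
  set step : List ℕ → List ℕ :=
    fun l => sInf {x | x ∈ A ∧ x ∉ l ∧ c l.head! x = blue} :: l with hstep
  set F : ℕ → List ℕ := fun n => step^[n] [sInf A] with hFdef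
  have hF0 : F 0 = [sInf A] := rfl
  have hFs : ∀ n, F (n+1) = sInf {x | x ∈ A ∧ x ∉ F n ∧ c (F n).head! x = blue} :: F n := by
    intro n
    show step^[n+1] [sInf A] = _
    rw [Function.iterate_succ_apply' step n _]
  set f : ℕ → ℕ := fun n => (F n).head! with hfdef
  have inv : ∀ n, F n ≠ [] ∧ (∀ x ∈ F n, x ∈ A) := by
    intro n; induction n with
    | zero =>
      refine ⟨by simp [hF0], ?_⟩
      intro x hx
      rw [hF0] at hx
      simp only [List.mem_singleton] at hx
      exact hx ▸ Nat.sInf_mem hA.nonempty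
    | succ n ih =>
      have hw : (F n).head! ∈ F n := List.head!_mem_self ih.1
      have hwA : (F n).head! ∈ A := ih.2 _ hw
      have hSne : {x | x ∈ A ∧ x ∉ F n ∧ c (F n).head! x = blue}.Nonempty := by
        have h1 : ({x | x ∈ A ∧ x ≠ (F n).head! ∧ c (F n).head! x = blue}
            \ {x | x ∈ F n}).Infinite :=
          (hout _ hwA).diff (List.finite_toSet (F n))
        refine h1.nonempty.mono ?_
        rintro x ⟨⟨hxA, -, hxb⟩, hxF⟩
        exact ⟨hxA, hxF, hxb⟩
      have hmem := Nat.sInf_mem hSne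
      rw [hFs n]
      refine ⟨by simp, ?_⟩
      intro x hx
      rcases List.mem_cons.mp hx with h' | h'
      · exact h' ▸ hmem.1
      · exact ih.2 x h'
  have hSne : ∀ n, ({x | x ∈ A ∧ x ∉ F n ∧ c (F n).head! x = blue}).Nonempty := by
    intro n
    have hw : (F n).head! ∈ F n := List.head!_mem_self (inv n).1
    have hwA : (F n).head! ∈ A := (inv n).2 _ hw
    have h1 : ({x | x ∈ A ∧ x ≠ (F n).head! ∧ c (F n).head! x = blue}
        \ {x | x ∈ F n}).Infinite := (hout _ hwA).diff (List.finite_toSet (F n))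
    refine h1.nonempty.mono ?_
    rintro x ⟨⟨hxA, -, hxb⟩, hxF⟩
    exact ⟨hxA, hxF, hxb⟩
  have hpick : ∀ n, f (n+1) ∈ A ∧ f (n+1) ∉ F n ∧ c (f n) (f (n+1)) = blue := by
    intro n
    have hmem := Nat.sInf_mem (hSne n)
    have hfs : f (n+1) = sInf {x | x ∈ A ∧ x ∉ F n ∧ c (F n).head! x = blue} := by
      show (F (n+1)).head! = _
      rw [hFs n]; rfl
    rw [hfs]
    exact ⟨hmem.1, hmem.2.1, hmem.2.2⟩
  have hfF : ∀ m n, m ≤ n → f m ∈ F n := by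
    intro m n hmn
    induction n with
    | zero =>
      have : m = 0 := by omega
      subst this
      exact List.head!_mem_self (inv 0).1
    | succ n ih =>
      rcases Nat.lt_or_ge m (n+1) with h' | h'
      · rw [hFs n]
        exact List.mem_cons_of_mem _ (ih (by omega))
      · have : m = n + 1 := by omega
        subst this
        exact List.head!_mem_self (inv (n+1)).1
  have hmemF : ∀ n x, x ∈ F n → ∃ k, k ≤ n ∧ f k = x := by
    intro n
    induction n with
    | zero =>
      intro x hx
      rw [hF0] at hx
      simp only [List.mem_singleton] at hx
      exact ⟨0, le_refl _, hx.symm⟩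
    | succ n ih =>
      intro x hx
      rw [hFs n] at hx
      rcases List.mem_cons.mp hx with h' | h'
      · refine ⟨n+1, le_refl _, ?_⟩
        show (F (n+1)).head! = x
        rw [hFs n, h']; rfl
      · obtain ⟨k, hk, hfk⟩ := ih x h'
        exact ⟨k, by omega, hfk⟩
  have hinj : Function.Injective f := by
    have key : ∀ m n, m < n → f m ≠ f n := by
      intro m n hmn heq
      obtain ⟨n', rfl⟩ : ∃ n', n = n' + 1 := ⟨n - 1, by omega⟩
      have h1 : f m ∈ F n' := hfF m n' (by omega)
      have h2 : f (n'+1) ∉ F n' := (hpick n').2.1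
      exact h2 (heq ▸ h1)
    intro m n heq
    rcases lt_trichotomy m n with h' | h' | h'
    · exact absurd heq (key m n h')
    · exact h'
    · exact absurd heq.symm (key n m h')
  have hrange : Set.range f = A := by
    apply Set.eq_of_subset_of_subset
    · rintro _ ⟨n, rfl⟩
      exact (inv n).2 _ (List.head!_mem_self (inv n).1)
    · intro a haA
      by_contra hnr
      have hnF : ∀ n, a ∉ F n := by
        intro n hn
        obtain ⟨k, -, hk⟩ := hmemF n a hn
        exact hnr ⟨k, hk⟩
      have hWfin : {n : ℕ | f n ∈ {w | w ∈ A ∧ w ≠ a ∧ c w a = red}}.Finite :=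
        Set.Finite.preimage hinj.injOn (hin a haA)
      obtain ⟨N, hN⟩ := hWfin.bddAbove
      have hsmall : ∀ n, N + 1 ≤ n → f (n+1) < a := by
        intro n hn
        have hfnA : f n ∈ A := (inv n).2 _ (List.head!_mem_self (inv n).1)
        have hfna : f n ≠ a := fun h' => hnr ⟨n, h'⟩
        have hblue : c (f n) a = blue := by
          by_contra hb
          have : c (f n) a = red := by
            unfold red; unfold blue at hb
            revert hb; cases c (f n) a <;> simp
          have : n ∈ {n : ℕ | f n ∈ {w | w ∈ A ∧ w ≠ a ∧ c w a = red}} :=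
            ⟨hfnA, hfna, this⟩
          have := hN this
          omega
        have haS : a ∈ {x | x ∈ A ∧ x ∉ F n ∧ c (F n).head! x = blue} :=
          ⟨haA, hnF n, hblue⟩
        have hle : f (n+1) ≤ a := by
          have : f (n+1) = sInf {x | x ∈ A ∧ x ∉ F n ∧ c (F n).head! x = blue} := by
            show (F (n+1)).head! = _
            rw [hFs n]; rfl
          rw [this]
          exact Nat.sInf_le haS
        have hne : f (n+1) ≠ a := fun h' => hnr ⟨n+1, h'⟩
        omega
      have hInf : (Set.Ici (N+1)).Infinite := Set.Ici_infinite _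
      have himg : ((fun n => f (n+1)) '' Set.Ici (N+1)).Infinite :=
        hInf.image (fun x _ y _ hxy => by
          have := hinj hxy; omega)
      have hsub : ((fun n => f (n+1)) '' Set.Ici (N+1)) ⊆ Set.Iio a := by
        rintro _ ⟨n, hn, rfl⟩
        exact hsmall n hn
      exact himg (Set.Finite.subset (Set.finite_Iio a) hsub)
  refine ⟨f, ⟨hinj, ?_, fun j => (hpick j).2.2⟩, hrange⟩
  intro j
  exact hpos _ ((inv j).2 _ (List.head!_mem_self (inv j).1))


/-- If there is no red directed path of length `r` and every blue directed path has
upper density at most `1/r`, then each level set `A_i` has upper density exactly `1/r`. -/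
theorem stmt8 (r : ℕ) (hr : 1 ≤ r) (c : ℕ → ℕ → Bool) (h : NoPathOfLength c red r)
    (hblue : ∀ f : ℕ → ℕ, InfPath c blue f → upDens (Set.range f) ≤ 1 / (r : ℝ))
    (i : ℕ) (hi : i < r) :
    upDens {v | Level c v i} = 1 / (r : ℝ) := by
  classical
  set L : ℕ → Set ℕ := fun k => {v | Level c v k} with hLdef
  have hrpos : (0:ℝ) < r := by exact_mod_cast hr
  -- Step 1: upper bound for every level set
  have hub : ∀ k, upDens (L k) ≤ 1 / (r:ℝ) := by
    intro k
    by_cases hfin : (L k).Finite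
    · rw [upDens_finite hfin]; positivity
    · have hKinf : (L k).Infinite := hfin
      have hchoice : ∀ v, ∃ l : List ℕ, v ∈ L k →
          FinPath c red l ∧ l.head? = some v ∧ l.length = k + 1 := by
        intro v
        by_cases hv : v ∈ L k
        · obtain ⟨l, hl⟩ := hv.1
          exact ⟨l, fun _ => hl⟩
        · exact ⟨[], fun h' => absurd h' hv⟩
      choose P hP using hchoice
      have hposL : ∀ v ∈ L k, 0 < v := by
        intro v hv
        obtain ⟨hfp, hhd, -⟩ := hP v hv
        exact hfp.2.1 v (List.mem_of_mem_head? (by rw [hhd]; rfl))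
      have hkey : ∀ w x, w ∈ L k → x ∈ L k → w ≠ x → c w x = red → w ∈ P x := by
        intro w x hw hx hne hered
        by_contra hwP
        obtain ⟨⟨hnd, hpos2, hch⟩, hhd, hlen⟩ := hP x hx
        apply hw.2
        refine ⟨w :: P x, ⟨?_, ?_, ?_⟩, rfl, by simp [hlen]⟩
        · exact List.nodup_cons.mpr ⟨hwP, hnd⟩
        · intro y hy
          rcases List.mem_cons.mp hy with h' | h'
          · exact h' ▸ hposL w hw
          · exact hpos2 y h'
        · show List.IsChain _ (w :: P x)
          rw [List.isChain_cons]
          refine ⟨?_, hch⟩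
          intro y hy
          rw [hhd] at hy
          simp only [Option.mem_def, Option.some_inj] at hy
          exact hy ▸ hered
      set Bset : Set ℕ :=
        {w | w ∈ L k ∧ {x | x ∈ L k ∧ x ≠ w ∧ c w x = blue}.Finite} with hBdef
      have hBfin : Bset.Finite := by
        by_contra hBinf
        have hBinf' : Bset.Infinite := hBinf
        obtain ⟨T, hTsub, hTcard⟩ := hBinf'.exists_subset_card_eq (k+2)
        have hEfin : (⋃ w ∈ T, {x | x ∈ L k ∧ x ≠ w ∧ c w x = blue}).Finite :=
          Set.Finite.biUnion T.finite_toSet (fun w hw => (hTsub hw).2)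
        obtain ⟨x, hx⟩ := (hKinf.diff (hEfin.union T.finite_toSet)).nonempty
        have hxL : x ∈ L k := hx.1
        have hxE := hx.2
        have hTP : (T : Set ℕ) ⊆ {y | y ∈ P x} := by
          intro w hw
          have hwL : w ∈ L k := (hTsub hw).1
          have hxw : x ≠ w := by
            rintro rfl
            exact hxE (Or.inr hw)
          have hered : c w x = red := by
            by_contra hb
            have hblue' : c w x = blue := by
              unfold red at hb; unfold blue
              revert hb; cases c w x <;> simp
            apply hxE
            left
            exact Set.mem_biUnion hw ⟨hxL, hxw, hblue'⟩
          exact hkey w x hwL hxL (Ne.symm hxw) hered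
        have hsubT : T ⊆ (P x).toFinset := fun w hw => List.mem_toFinset.mpr (hTP hw)
        have hcard := Finset.card_le_card hsubT
        have hnd : (P x).Nodup := (hP x hxL).1.1
        have hlen : (P x).length = k + 1 := (hP x hxL).2.2
        rw [hTcard, List.toFinset_card_of_nodup hnd, hlen] at hcard
        omega
      set A' : Set ℕ := L k \ Bset with hA'def
      have hA'inf : A'.Infinite := hKinf.diff hBfin
      have hout : ∀ w ∈ A', {x | x ∈ A' ∧ x ≠ w ∧ c w x = blue}.Infinite := by
        intro w hw
        have h1 : {x | x ∈ L k ∧ x ≠ w ∧ c w x = blue}.Infinite := by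
          by_contra h'
          rw [Set.not_infinite] at h'
          exact hw.2 ⟨hw.1, h'⟩
        refine (h1.diff hBfin).mono ?_
        rintro x ⟨⟨hxL, hxw, hxb⟩, hxB⟩
        exact ⟨⟨hxL, hxB⟩, hxw, hxb⟩
      have hin : ∀ x ∈ A', {w | w ∈ A' ∧ w ≠ x ∧ c w x = red}.Finite := by
        intro x hx
        apply Set.Finite.subset (List.finite_toSet (P x))
        rintro w ⟨hwA, hwx, hwr⟩
        exact hkey w x hwA.1 hx.1 hwx hwr
      obtain ⟨f, hfpath, hfrange⟩ :=
        exists_blue_path c A' hA'inf (fun v hv => hposL v hv.1) hout hin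
      have hd := hblue f hfpath
      rw [hfrange] at hd
      have hBzero : upDens Bset = 0 := upDens_finite hBfin
      calc upDens (L k) ≤ upDens (A' ∪ Bset) := by
            apply upDens_mono
            intro v hv
            by_cases hvB : v ∈ Bset
            · exact Or.inr hvB
            · exact Or.inl ⟨hv, hvB⟩
        _ ≤ upDens A' + upDens Bset := upDens_union_le _ _
        _ ≤ 1/(r:ℝ) := by rw [hBzero]; linarith
  -- Step 2: the sum of densities is at least 1
  have hsum : (1:ℝ) ≤ ∑ k ∈ Finset.range r, upDens (L k) := by
    have hpt : ∀ n : ℕ, 1 ≤ n → (∑ k ∈ Finset.range r, densF (L k) n) = 1 := by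
      intro n hn
      have hpart : (Finset.Icc 1 n) = (Finset.range r).biUnion
          (fun k => (Finset.Icc 1 n).filter (fun m => m ∈ L k)) := by
        apply Finset.ext
        intro m
        simp only [Finset.mem_biUnion, Finset.mem_filter, Finset.mem_range]
        constructor
        · intro hm
          have hm1 : 0 < m := by
            rw [Finset.mem_Icc] at hm; omega
          obtain ⟨i', hi', hlev⟩ := level_exists h hm1
          exact ⟨i', hi', hm, hlev⟩
        · rintro ⟨-, -, hm, -⟩; exact hm
      have hdisj : ∀ k1 ∈ Finset.range r, ∀ k2 ∈ Finset.range r, k1 ≠ k2 →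
          Disjoint ((Finset.Icc 1 n).filter (fun m => m ∈ L k1))
            ((Finset.Icc 1 n).filter (fun m => m ∈ L k2)) := by
        intro k1 _ k2 _ hne
        rw [Finset.disjoint_left]
        intro m hm1 hm2
        rw [Finset.mem_filter] at hm1 hm2
        exact hne (level_unique hm1.2 hm2.2)
      have hcards : n = ∑ k ∈ Finset.range r,
          ((Finset.Icc 1 n).filter (fun m => m ∈ L k)).card := by
        have h1 : (Finset.Icc 1 n).card = n := by rw [Nat.card_Icc]; omega
        have h2 := Finset.card_biUnion hdisj
        rw [← hpart] at h2
        rw [h1] at h2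
        exact h2
      unfold densF
      rw [← Finset.sum_div]
      rw [div_eq_one_iff_eq (by exact_mod_cast (by omega : n ≠ 0))]
      exact_mod_cast hcards.symm
    have h1 : limsup (fun n => ∑ k ∈ Finset.range r, densF (L k) n) atTop = 1 := by
      have hev : (fun n => ∑ k ∈ Finset.range r, densF (L k) n) =ᶠ[atTop]
          (fun _ => (1:ℝ)) := eventually_atTop.mpr ⟨1, fun n hn => hpt n hn⟩
      rw [limsup_congr hev, limsup_const]
    have h2 := limsup_sum_le (Finset.range r) (fun k => densF (L k))
      (fun j n => densF_nonneg _ _) (fun j n => densF_le_one _ _)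
    rw [h1] at h2
    refine h2.trans (le_of_eq ?_)
    apply Finset.sum_congr rfl
    intro k _
    exact (upDens_eq (L k)).symm
  -- Step 3: conclude
  have hge : 1 / (r:ℝ) ≤ upDens (L i) := by
    have hmemi : i ∈ Finset.range r := Finset.mem_range.mpr hi
    have hsplit : ∑ k ∈ Finset.range r, upDens (L k)
        = upDens (L i) + ∑ k ∈ (Finset.range r).erase i, upDens (L k) :=
      (Finset.add_sum_erase _ _ hmemi).symm
    have hcarderase : ((Finset.range r).erase i).card = r - 1 := by
      rw [Finset.card_erase_of_mem hmemi, Finset.card_range]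
    have hrest : ∑ k ∈ (Finset.range r).erase i, upDens (L k) ≤ ((r:ℝ) - 1) * (1/(r:ℝ)) := by
      calc ∑ k ∈ (Finset.range r).erase i, upDens (L k)
          ≤ ∑ k ∈ (Finset.range r).erase i, 1/(r:ℝ) :=
            Finset.sum_le_sum (fun k _ => hub k)
        _ = (((Finset.range r).erase i).card : ℝ) * (1/(r:ℝ)) := by
            rw [Finset.sum_const, nsmul_eq_mul]
        _ = ((r:ℝ) - 1) * (1/(r:ℝ)) := by
            rw [hcarderase]
            congr 1
            have : (1:ℕ) ≤ r := hr
            push_cast [this]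
            ring
    have h1r : ((r:ℝ) - 1) * (1/(r:ℝ)) = 1 - 1/(r:ℝ) := by
      field_simp
    rw [hsplit] at hsum
    rw [h1r] at hrest
    linarith
  exact le_antisymm (hub i) hge
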